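/- Let k ≥ 3 and let a_1 > 0, a_2,…,a_k be integers, with s_i = a_1 + … + a_i. For each 2 ≤ i ≤ k let q_i, r_i be integers such that: if s_i ≤ 0 then q_i > 0, r_i > 0 and −s_i = q_i·a_1 − r_i; otherwise q_i = 0 and r_i = s_i. Define sequences A, R_2,…,R_k, Z : ℕ → ℤ (the numbers of nodes labelled (a_1), (r_2),…,(r_k), (0) at each level of the generating tree of the succession rule (a_1); (a_1) ⇝ (0)^{q_2}(r_2)(a_1)^{a_1−(q_2+1)}; (r_i) ⇝ ((0)^{q_2}(r_2))^{q_i}(0)^{q_{i+1}}(r_{i+1})(a_1)^{r_i−(q_i(q_2+1)+q_{i+1}+1)} for 2 ≤ i ≤ k−1; (r_k) ⇝ ((0)^{q_2}(r_2))^{q_k}(0)^{q_k}(r_k)(a_1)^{r_k−(q_k(q_2+1)+q_k+1)}, where (0) produces no sons) by: A(0)=1, all other values at 0 equal to 0, and for n ≥ 0: A(n+1) = (a_1−q_2−1)·A(n) + Σ_{i=2}^{k−1} (r_i−q_i(q_2+1)−q_{i+1}−1)·R_i(n) + (r_k−q_k(q_2+1)−q_k−1)·R_k(n); R_2(n+1)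 = A(n) + Σ_{i=2}^{k} q_i·R_i(n); R_{i+1}(n+1) = R_i(n) for 2 ≤ i ≤ k−2; R_k(n+1) = R_{k−1}(n) + R_k(n); Z(n+1) = q_2·A(n) + Σ_{i=2}^{k−1} (q_i·q_2 + q_{i+1})·R_i(n) + (q_k·q_2 + q_k)·R_k(n). Then for every n ≥ 0, A(n) + Σ_{i=2}^{k} R_i(n) + Z(n) = f_n, where f is the C-finite sequence with coefficients a_1,…,a_k and default initial conditions. -/

import Mathlib

/-!
Merge the labels `(a₁)` and `(0)` into one label `1` and write `D n l` (`mergedLevel`) for the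
number of nodes of level `n` with label `l ∈ {1, …, k}`, label `i ≥ 2` being `(rᵢ)`. The number
of `(0)`'s at every level is `∑ qᵢ Rᵢ`, and with `rᵢ = sᵢ + qᵢ a₁` all the `q`'s cancel from the
total of `D (n + 1)`, which becomes `∑ sₗ D n l`. Since the labels `(rᵢ)` move up by one per
level, the tail sums `T n j = ∑_{l ≥ j} D n l` satisfy `T (n + 1) (j + 1) = T n j` and, by Abel
summation, `T (n + 1) 1 = ∑ aᵢ T n i`: this is the recurrence of `f`, so `T n j = f (n + 1 - j)`,
and `j = 1` is the theorem.
-/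

open Finset

theorem Finset.sum_Icc_eq_add_sum_Icc_succ {M : Type*} [AddCommMonoid M] (f : ℕ → M) {a b : ℕ}
    (h : a ≤ b) : ∑ i ∈ Icc a b, f i = f a + ∑ i ∈ Icc (a + 1) b, f i := by
  rw [← add_sum_Ioc_eq_sum_Icc h, Icc_add_one_left_eq_Ioc]

theorem Finset.sum_Icc_succ_succ {M : Type*} [AddCommMonoid M] (f : ℕ → M) (a b : ℕ) :
    ∑ i ∈ Icc (a + 1) (b + 1), f i = ∑ i ∈ Icc a b, f (i + 1) := by
  rw [← map_add_right_Icc, sum_map]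
  rfl

theorem Finset.sum_Icc_eq_sum_Icc_sub_one_add {M : Type*} [AddCommMonoid M] (f : ℕ → M)
    {a b : ℕ} (h : a ≤ b) (hb : 1 ≤ b) : ∑ i ∈ Icc a b, f i = ∑ i ∈ Icc a (b - 1), f i + f b := by
  obtain ⟨c, rfl⟩ : ∃ c, b = c + 1 := ⟨b - 1, by omega⟩
  rw [sum_Icc_succ_top h, Nat.add_sub_cancel]

theorem Finset.sum_Icc_mul_sum_Icc_eq {ι M : Type*} [Preorder ι] [LocallyFiniteOrder ι]
    [NonUnitalNonAssocSemiring M] (a D : ι → M) (b c : ι) :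
    ∑ i ∈ Icc b c, a i * ∑ l ∈ Icc i c, D l = ∑ l ∈ Icc b c, (∑ i ∈ Icc b l, a i) * D l := by
  simp only [mul_sum, sum_mul]
  exact sum_comm' fun i l => by
    simp only [mem_Icc]
    exact ⟨fun h => ⟨⟨h.1.1, h.2.1⟩, h.1.1.trans h.2.1, h.2.2⟩,
      fun h => ⟨⟨h.1.1, h.1.2.trans h.2.2⟩, h.1.2, h.2.2⟩⟩

theorem sum_Icc_tail_eq_of_companion {k : ℕ} {a s f : ℕ → ℤ}
    (hs : ∀ i, s i = ∑ l ∈ Icc 1 i, a l) (hf0 : f 0 = 1)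
    (hf : ∀ n : ℕ, 1 ≤ n → f n = ∑ i ∈ Icc 1 k, a i * (if i ≤ n then f (n - i) else 0))
    {D : ℕ → ℕ → ℤ} (hD0_one : D 0 1 = 1) (hD0 : ∀ l, 2 ≤ l → l ≤ k → D 0 l = 0)
    (hshift : ∀ n j, 1 ≤ j → j < k → ∑ l ∈ Icc (j + 1) k, D (n + 1) l = ∑ l ∈ Icc j k, D n l)
    (htop : ∀ n, ∑ l ∈ Icc 1 k, D (n + 1) l = ∑ l ∈ Icc 1 k, s l * D n l) (n : ℕ) :
    ∀ j, 1 ≤ j → j ≤ k → ∑ l ∈ Icc j k, D n l = if j ≤ n + 1 then f (n + 1 - j) else 0 := by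
  induction n with
  | zero =>
    have hzero : ∀ j, 2 ≤ j → ∑ l ∈ Icc j k, D 0 l = 0 := fun j hj =>
      sum_eq_zero fun l hl => hD0 l (hj.trans (mem_Icc.1 hl).1) (mem_Icc.1 hl).2
    intro j hj hjk
    obtain rfl | hj := hj.eq_or_lt
    · rw [sum_Icc_eq_add_sum_Icc_succ _ hjk, hzero _ le_rfl, hD0_one, hf0]
      rfl
    · rw [hzero j hj, if_neg (by omega)]
  | succ n ih =>
    rintro (_ | _ | j) hj hjk
    · omega
    · simp only [htop, hs, ← sum_Icc_mul_sum_Icc_eq]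
      rw [if_pos (by omega), Nat.add_sub_cancel, hf (n + 1) (by omega)]
      exact sum_congr rfl fun i hi => by rw [ih i (mem_Icc.1 hi).1 (mem_Icc.1 hi).2]
    · rw [hshift n (j + 1) (by omega) hjk, ih (j + 1) (by omega) (by omega)]
      simp

section GeneratingTree

variable {k : ℕ} {a q r s A Z : ℕ → ℤ} {R : ℕ → ℕ → ℤ}

theorem sum_Icc_mul_R_succ
    (hRmid : ∀ n : ℕ, ∀ i, 2 ≤ i → i ≤ k - 2 → R (i + 1) (n + 1) = R i n)
    (hRk : ∀ n : ℕ, R k (n + 1) = R (k - 1) n + R k n)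
    (w : ℕ → ℤ) {j : ℕ} (hj : 2 ≤ j) (hjk : j < k) (n : ℕ) :
    ∑ i ∈ Icc (j + 1) k, w i * R i (n + 1)
      = ∑ i ∈ Icc j (k - 1), w (i + 1) * R i n + w k * R k n := by
  obtain ⟨K, rfl⟩ : ∃ K, k = K + 2 := ⟨k - 2, by omega⟩
  simp only [show K + 2 - 1 = K + 1 by omega, Nat.add_sub_cancel] at hRmid hRk ⊢
  rw [sum_Icc_succ_top (by omega), sum_Icc_succ_succ, sum_Icc_succ_top (by omega), hRk,
    sum_congr rfl fun i hi => by rw [hRmid n i (hj.trans (mem_Icc.1 hi).1) (mem_Icc.1 hi).2]]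
  ring

theorem sum_Icc_R_succ
    (hRmid : ∀ n : ℕ, ∀ i, 2 ≤ i → i ≤ k - 2 → R (i + 1) (n + 1) = R i n)
    (hRk : ∀ n : ℕ, R k (n + 1) = R (k - 1) n + R k n)
    {j : ℕ} (hj : 2 ≤ j) (hjk : j < k) (n : ℕ) :
    ∑ i ∈ Icc (j + 1) k, R i (n + 1) = ∑ i ∈ Icc j k, R i n := by
  have h := sum_Icc_mul_R_succ hRmid hRk (fun _ => 1) hj hjk n
  simp only [one_mul] at h
  rw [h, sum_Icc_eq_sum_Icc_sub_one_add _ hjk.le (by omega)]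

theorem Z_eq_sum_mul_R (hk : 3 ≤ k) (hZ0 : Z 0 = 0) (hR0 : ∀ i, 2 ≤ i → i ≤ k → R i 0 = 0)
    (hR2 : ∀ n : ℕ, R 2 (n + 1) = A n + ∑ i ∈ Icc 2 k, q i * R i n)
    (hRmid : ∀ n : ℕ, ∀ i, 2 ≤ i → i ≤ k - 2 → R (i + 1) (n + 1) = R i n)
    (hRk : ∀ n : ℕ, R k (n + 1) = R (k - 1) n + R k n)
    (hZ : ∀ n : ℕ, Z (n + 1) = q 2 * A n
        + (∑ i ∈ Icc 2 (k - 1), (q i * q 2 + q (i + 1)) * R i n)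
        + (q k * q 2 + q k) * R k n) :
    ∀ n, Z n = ∑ i ∈ Icc 2 k, q i * R i n
  | 0 => by
    rw [hZ0, sum_eq_zero fun i hi => by rw [hR0 i (mem_Icc.1 hi).1 (mem_Icc.1 hi).2, mul_zero]]
  | n + 1 => by
    have hmid : ∑ i ∈ Icc 2 (k - 1), (q i * q 2 + q (i + 1)) * R i n
        = q 2 * ∑ i ∈ Icc 2 (k - 1), q i * R i n + ∑ i ∈ Icc 2 (k - 1), q (i + 1) * R i n := by
      rw [mul_sum, ← sum_add_distrib]
      exact sum_congr rfl fun i _ => by ring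
    rw [hZ n, sum_Icc_eq_add_sum_Icc_succ _ (by omega : 2 ≤ k),
      sum_Icc_mul_R_succ hRmid hRk q le_rfl (by omega) n, hR2 n,
      sum_Icc_eq_sum_Icc_sub_one_add _ (by omega : 2 ≤ k) (by omega), hmid]
    ring

theorem A_add_Z_succ (hk : 2 ≤ k) (hr : ∀ i, 2 ≤ i → i ≤ k → r i = s i + q i * a 1)
    (hA : ∀ n : ℕ, A (n + 1) = (a 1 - q 2 - 1) * A n
        + (∑ i ∈ Icc 2 (k - 1), (r i - q i * (q 2 + 1) - q (i + 1) - 1) * R i n)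
        + (r k - q k * (q 2 + 1) - q k - 1) * R k n)
    (hZ : ∀ n : ℕ, Z (n + 1) = q 2 * A n
        + (∑ i ∈ Icc 2 (k - 1), (q i * q 2 + q (i + 1)) * R i n)
        + (q k * q 2 + q k) * R k n)
    (n : ℕ) (hZn : Z n = ∑ i ∈ Icc 2 k, q i * R i n) :
    A (n + 1) + Z (n + 1) = (a 1 - 1) * (A n + Z n) + ∑ i ∈ Icc 2 k, (s i - 1) * R i n := by
  have hmid : ∑ i ∈ Icc 2 (k - 1), (r i - q i * (q 2 + 1) - q (i + 1) - 1) * R i n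
        + ∑ i ∈ Icc 2 (k - 1), (q i * q 2 + q (i + 1)) * R i n
      = (a 1 - 1) * ∑ i ∈ Icc 2 (k - 1), q i * R i n
        + ∑ i ∈ Icc 2 (k - 1), (s i - 1) * R i n := by
    rw [← sum_add_distrib, mul_sum, ← sum_add_distrib]
    refine sum_congr rfl fun i hi => ?_
    rw [hr i (mem_Icc.1 hi).1 (by have := (mem_Icc.1 hi).2; omega)]
    ring
  rw [hA, hZ, hZn, sum_Icc_eq_sum_Icc_sub_one_add _ hk (by omega),
    sum_Icc_eq_sum_Icc_sub_one_add (fun i => (s i - 1) * R i n) hk (by omega), hr k hk le_rfl]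
  linear_combination hmid

def mergedLevel (A Z : ℕ → ℤ) (R : ℕ → ℕ → ℤ) (n l : ℕ) : ℤ :=
  if l = 1 then A n + Z n else R l n

theorem mergedLevel_one (n : ℕ) : mergedLevel A Z R n 1 = A n + Z n :=
  if_pos rfl

theorem mergedLevel_of_two_le {n l : ℕ} (hl : 2 ≤ l) : mergedLevel A Z R n l = R l n := by
  rw [mergedLevel, if_neg (by omega)]

theorem sum_Icc_mergedLevel_of_two_le {j : ℕ} (hj : 2 ≤ j) (n : ℕ) :
    ∑ l ∈ Icc j k, mergedLevel A Z R n l = ∑ l ∈ Icc j k, R l n :=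
  sum_congr rfl fun _ hl => mergedLevel_of_two_le (hj.trans (mem_Icc.1 hl).1)

theorem sum_Icc_one_mergedLevel (hk : 1 ≤ k) (n : ℕ) :
    ∑ l ∈ Icc 1 k, mergedLevel A Z R n l = A n + Z n + ∑ l ∈ Icc 2 k, R l n := by
  rw [sum_Icc_eq_add_sum_Icc_succ _ hk, sum_Icc_mergedLevel_of_two_le le_rfl, mergedLevel_one]

theorem sum_Icc_mergedLevel_succ (hk : 3 ≤ k)
    (hR2 : ∀ n : ℕ, R 2 (n + 1) = A n + ∑ i ∈ Icc 2 k, q i * R i n)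
    (hRmid : ∀ n : ℕ, ∀ i, 2 ≤ i → i ≤ k - 2 → R (i + 1) (n + 1) = R i n)
    (hRk : ∀ n : ℕ, R k (n + 1) = R (k - 1) n + R k n)
    (hZn : ∀ n, Z n = ∑ i ∈ Icc 2 k, q i * R i n)
    (n j : ℕ) (hj : 1 ≤ j) (hjk : j < k) :
    ∑ l ∈ Icc (j + 1) k, mergedLevel A Z R (n + 1) l = ∑ l ∈ Icc j k, mergedLevel A Z R n l := by
  rw [sum_Icc_mergedLevel_of_two_le (by omega)]
  obtain rfl | hj := hj.eq_or_lt
  · rw [sum_Icc_one_mergedLevel hjk.le, sum_Icc_eq_add_sum_Icc_succ _ hjk,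
      sum_Icc_R_succ hRmid hRk (j := 1 + 1) le_rfl (by omega), hR2, ← hZn]
  · rw [sum_Icc_mergedLevel_of_two_le hj, sum_Icc_R_succ hRmid hRk hj hjk]

theorem sum_Icc_one_mergedLevel_succ (hk : 3 ≤ k) (hs1 : s 1 = a 1)
    (hr : ∀ i, 2 ≤ i → i ≤ k → r i = s i + q i * a 1)
    (hA : ∀ n : ℕ, A (n + 1) = (a 1 - q 2 - 1) * A n
        + (∑ i ∈ Icc 2 (k - 1), (r i - q i * (q 2 + 1) - q (i + 1) - 1) * R i n)
        + (r k - q k * (q 2 + 1) - q k - 1) * R k n)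
    (hR2 : ∀ n : ℕ, R 2 (n + 1) = A n + ∑ i ∈ Icc 2 k, q i * R i n)
    (hRmid : ∀ n : ℕ, ∀ i, 2 ≤ i → i ≤ k - 2 → R (i + 1) (n + 1) = R i n)
    (hRk : ∀ n : ℕ, R k (n + 1) = R (k - 1) n + R k n)
    (hZ : ∀ n : ℕ, Z (n + 1) = q 2 * A n
        + (∑ i ∈ Icc 2 (k - 1), (q i * q 2 + q (i + 1)) * R i n)
        + (q k * q 2 + q k) * R k n)
    (hZn : ∀ n, Z n = ∑ i ∈ Icc 2 k, q i * R i n) (n : ℕ) :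
    ∑ l ∈ Icc 1 k, mergedLevel A Z R (n + 1) l = ∑ l ∈ Icc 1 k, s l * mergedLevel A Z R n l := by
  have hweighted : ∑ l ∈ Icc (1 + 1) k, s l * mergedLevel A Z R n l
      = ∑ l ∈ Icc 2 k, s l * R l n :=
    sum_congr rfl fun l hl => by rw [mergedLevel_of_two_le (mem_Icc.1 hl).1]
  rw [sum_Icc_eq_add_sum_Icc_succ _ (by omega : 1 ≤ k),
    sum_Icc_mergedLevel_succ hk hR2 hRmid hRk hZn n 1 le_rfl (by omega),
    sum_Icc_one_mergedLevel (by omega),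
    sum_Icc_eq_add_sum_Icc_succ (fun l => s l * mergedLevel A Z R n l) (by omega : 1 ≤ k),
    hweighted, mergedLevel_one, mergedLevel_one, A_add_Z_succ (by omega) hr hA hZ n (hZn n), hs1]
  simp only [sub_mul, one_mul, sum_sub_distrib]
  ring

end GeneratingTree

theorem stmt_2_general (k : ℕ) (hk : 3 ≤ k) (a : ℕ → ℤ)
    (s : ℕ → ℤ) (hs : ∀ i, s i = ∑ l ∈ Finset.Icc 1 i, a l)
    (q r : ℕ → ℤ)
    (hqr : ∀ i, 2 ≤ i → i ≤ k →
      (s i ≤ 0 → 0 < q i ∧ 0 < r i ∧ -(s i) = q i * a 1 - r i) ∧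
      (0 < s i → q i = 0 ∧ r i = s i))
    (f : ℕ → ℤ) (hf0 : f 0 = 1)
    (hf : ∀ n : ℕ, 1 ≤ n →
      f n = ∑ i ∈ Finset.Icc 1 k, a i * (if i ≤ n then f (n - i) else 0))
    (A Z : ℕ → ℤ) (R : ℕ → ℕ → ℤ)
    (hA0 : A 0 = 1) (hZ0 : Z 0 = 0) (hR0 : ∀ i, 2 ≤ i → i ≤ k → R i 0 = 0)
    (hA : ∀ n : ℕ, A (n + 1) = (a 1 - q 2 - 1) * A n
        + (∑ i ∈ Finset.Icc 2 (k - 1), (r i - q i * (q 2 + 1) - q (i + 1) - 1) * R i n)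
        + (r k - q k * (q 2 + 1) - q k - 1) * R k n)
    (hR2 : ∀ n : ℕ, R 2 (n + 1) = A n + ∑ i ∈ Finset.Icc 2 k, q i * R i n)
    (hRmid : ∀ n : ℕ, ∀ i, 2 ≤ i → i ≤ k - 2 → R (i + 1) (n + 1) = R i n)
    (hRk : ∀ n : ℕ, R k (n + 1) = R (k - 1) n + R k n)
    (hZ : ∀ n : ℕ, Z (n + 1) = q 2 * A n
        + (∑ i ∈ Finset.Icc 2 (k - 1), (q i * q 2 + q (i + 1)) * R i n)
        + (q k * q 2 + q k) * R k n) :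
    ∀ n : ℕ, A n + (∑ i ∈ Finset.Icc 2 k, R i n) + Z n = f n := by
  have hr : ∀ i, 2 ≤ i → i ≤ k → r i = s i + q i * a 1 := by
    intro i hi hik
    rcases le_or_gt (s i) 0 with hneg | hpos
    · linarith [((hqr i hi hik).1 hneg).2.2]
    · obtain ⟨hq, hrs⟩ := (hqr i hi hik).2 hpos
      rw [hq, hrs, zero_mul, add_zero]
  have hZn := Z_eq_sum_mul_R hk hZ0 hR0 hR2 hRmid hRk hZ
  have htail := sum_Icc_tail_eq_of_companion hs hf0 hf
    (by rw [mergedLevel_one, hA0, hZ0, add_zero])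
    (fun l hl hlk => by rw [mergedLevel_of_two_le hl, hR0 l hl hlk])
    (sum_Icc_mergedLevel_succ hk hR2 hRmid hRk hZn)
    (sum_Icc_one_mergedLevel_succ hk (by simp [hs]) hr hA hR2 hRmid hRk hZ hZn)
  intro n
  have h := htail n 1 le_rfl (by omega)
  rw [sum_Icc_one_mergedLevel (by omega), if_pos (by omega), Nat.add_sub_cancel] at h
  linarith

/-- General-degree version: the numbers of nodes labelled `(a₁)`, `(r₂), …, (r_k)`, `(0)`
per level of the generating tree of succession rule (14) of the paper sum to the C-finite
sequence with coefficients `a₁, …, a_k` and default initial conditions. -/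
theorem stmt_2 (k : ℕ) (hk : 3 ≤ k) (a : ℕ → ℤ) (ha1 : 0 < a 1)
    (s : ℕ → ℤ) (hs : ∀ i, s i = ∑ l ∈ Finset.Icc 1 i, a l)
    (q r : ℕ → ℤ)
    (hqr : ∀ i, 2 ≤ i → i ≤ k →
      (s i ≤ 0 → 0 < q i ∧ 0 < r i ∧ -(s i) = q i * a 1 - r i) ∧
      (0 < s i → q i = 0 ∧ r i = s i))
    (f : ℕ → ℤ) (hf0 : f 0 = 1)
    (hf : ∀ n : ℕ, 1 ≤ n →
      f n = ∑ i ∈ Finset.Icc 1 k, a i * (if i ≤ n then f (n - i) else 0))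
    (A Z : ℕ → ℤ) (R : ℕ → ℕ → ℤ)
    (hA0 : A 0 = 1) (hZ0 : Z 0 = 0) (hR0 : ∀ i, 2 ≤ i → i ≤ k → R i 0 = 0)
    (hA : ∀ n : ℕ, A (n + 1) = (a 1 - q 2 - 1) * A n
        + (∑ i ∈ Finset.Icc 2 (k - 1), (r i - q i * (q 2 + 1) - q (i + 1) - 1) * R i n)
        + (r k - q k * (q 2 + 1) - q k - 1) * R k n)
    (hR2 : ∀ n : ℕ, R 2 (n + 1) = A n + ∑ i ∈ Finset.Icc 2 k, q i * R i n)
    (hRmid : ∀ n : ℕ, ∀ i, 2 ≤ i → i ≤ k - 2 → R (i + 1) (n + 1) = R i n)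
    (hRk : ∀ n : ℕ, R k (n + 1) = R (k - 1) n + R k n)
    (hZ : ∀ n : ℕ, Z (n + 1) = q 2 * A n
        + (∑ i ∈ Finset.Icc 2 (k - 1), (q i * q 2 + q (i + 1)) * R i n)
        + (q k * q 2 + q k) * R k n) :
    ∀ n : ℕ, A n + (∑ i ∈ Finset.Icc 2 k, R i n) + Z n = f n :=
  stmt_2_general k hk a s hs q r hqr f hf0 hf A Z R hA0 hZ0 hR0 hA hR2 hRmid hRk hZ
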